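/- arXiv:1708.09253 — 4 statements merged into one kernel-verified Lean document; each statement's English description precedes it below -/
import Mathlib

section
/- Let A = (Q,T) be a d-dimensional VASS. If there exists a vector n ∈ ℝ^d with all components positive such that v · n < 0 for every v ∈ Inc(A), then the termination complexity of A is O(n), i.e., there is a constant a ∈ ℝ⁺ such that 𝓛(m) ≤ a·m for all sufficiently large m ∈ ℕ. -/
/-!
Give a configuration the weight `z · nv`. Along a zero-avoiding computation from a
configuration of size `m` the weight stays nonnegative, so it drops by at most
`m ∑ i, nv i`. Conversely, a path longer than `|Q|` visits some state twice within its
first `|Q|` steps, so it contains a short cycle, whose effect has weight at most `-ε`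
for a fixed `ε > 0` (there are finitely many short-cycle effects). Cutting such cycles
out until at most `|Q|` steps remain, a path of length `n` loses weight roughly
`ε n / |Q|`. Hence `n = O(m)`.
-/

open scoped BigOperators ENNReal

/-- A `d`-dimensional VASS: a set of states `Q` together with transitions
labelled by vectors in `{-1,0,1}^d`. -/
structure VASS (d : ℕ) (Q : Type) where
  T : Set (Q × (Fin d → ℤ) × Q)
  upd_mem : ∀ t ∈ T, ∀ i, t.2.1 i = -1 ∨ t.2.1 i = 0 ∨ t.2.1 i = 1

namespace VASS

variable {d : ℕ} {Q : Type}

/-- Scalar product of an integer vector with a real vector. -/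
def dotZ (v : Fin d → ℤ) (w : Fin d → ℝ) : ℝ := ∑ i, (v i : ℝ) * w i

/-- Scalar product of two real vectors. -/
def dotR (v w : Fin d → ℝ) : ℝ := ∑ i, v i * w i

/-- `A.IsPath n p u` : `p 0, u 0, p 1, u 1, …, u (n-1), p n` is a finite path
of length `n ≥ 1` in `A`. -/
def IsPath (A : VASS d Q) (n : ℕ) (p : ℕ → Q) (u : ℕ → Fin d → ℤ) : Prop :=
  1 ≤ n ∧ ∀ i < n, (p i, u i, p (i + 1)) ∈ A.T

/-- Effect of a path of length `n` with update vectors `u`. -/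
def eff (n : ℕ) (u : ℕ → Fin d → ℤ) : Fin d → ℤ :=
  fun i => ∑ j ∈ Finset.range n, u j i

/-- A short cycle: a cycle of length at most `|Q|`. -/
def IsShortCycle (A : VASS d Q) (n : ℕ) (p : ℕ → Q) (u : ℕ → Fin d → ℤ) : Prop :=
  A.IsPath n p u ∧ p n = p 0 ∧ n ≤ Nat.card Q

/-- `Inc A` : the set of effects of short cycles of `A`. -/
def Inc (A : VASS d Q) : Set (Fin d → ℤ) :=
  { v | ∃ n p u, A.IsShortCycle n p u ∧ v = eff n u }

/-- A zero-avoiding computation of length `n` : all configurations have all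
counters positive and consecutive configurations are related by transitions. -/
def IsZeroAvoiding (A : VASS d Q) (n : ℕ) (q : ℕ → Q) (z : ℕ → Fin d → ℕ) : Prop :=
  (∀ i ≤ n, ∀ j, 0 < z i j) ∧
  ∀ i < n, (q i, fun j => (z (i + 1) j : ℤ) - (z i j : ℤ), q (i + 1)) ∈ A.T

/-- `L(pv)` : the least bound on the length of zero-avoiding computations
initiated in the configuration `p v`. -/
noncomputable def Lval (A : VASS d Q) (p : Q) (v : Fin d → ℕ) : ℕ∞ :=
  ⨆ (n : ℕ) (_ : ∃ q z, q 0 = p ∧ z 0 = v ∧ A.IsZeroAvoiding n q z), (n : ℕ∞)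

/-- Termination complexity `𝓛(n)` : the max of `L(pv)` over configurations of size `n`. -/
noncomputable def L (A : VASS d Q) (n : ℕ) : ℕ∞ :=
  ⨆ (p : Q) (v : Fin d → ℕ) (_ : Finset.univ.sup v = n), A.Lval p v

/-- The set of normals of `A`: nonzero vectors `nv` with `v · nv ≤ 0` for all `v ∈ Inc A`. -/
def Normals (A : VASS d Q) : Set (Fin d → ℝ) :=
  { nv | nv ≠ 0 ∧ ∀ v ∈ A.Inc, dotZ v nv ≤ 0 }

/-- The cone (over ℝ) generated by a set of integer vectors. -/
def coneZ (V : Set (Fin d → ℤ)) : Set (Fin d → ℝ) :=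
  { x | ∃ (k : ℕ) (a : Fin k → ℝ) (v : Fin k → Fin d → ℤ),
      (∀ j, 0 ≤ a j) ∧ (∀ j, v j ∈ V) ∧ x = ∑ j, a j • (fun i => ((v j i : ℝ))) }

/-- A good normal: a positive normal such that for every `v ∈ cone(Inc A)`,
`-v ∈ cone(Inc A)` iff `v · n = 0`. -/
def IsGoodNormal (A : VASS d Q) (nv : Fin d → ℝ) : Prop :=
  nv ∈ A.Normals ∧ (∀ i, 0 < nv i) ∧
  ∀ x ∈ coneZ A.Inc, (-x ∈ coneZ A.Inc ↔ dotR x nv = 0)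

/-- `A.Reaches p q` : there is a finite path from `p` to `q`. -/
def Reaches (A : VASS d Q) (p q : Q) : Prop :=
  ∃ n pp u, A.IsPath n pp u ∧ pp 0 = p ∧ pp n = q

/-- A strongly connected component: a maximal set of states pairwise connected
by finite paths. -/
def IsSCC (A : VASS d Q) (R : Set Q) : Prop :=
  (∀ p ∈ R, ∀ q ∈ R, p ≠ q → A.Reaches p q) ∧
  ∀ S : Set Q, R ⊆ S → (∀ p ∈ S, ∀ q ∈ S, p ≠ q → A.Reaches p q) → S = R

/-- The VASS `A` restricted to the states of `R` and transitions within `R`. -/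
def restrict (A : VASS d Q) (R : Set Q) : VASS d R where
  T := { t | ((t.1 : Q), t.2.1, (t.2.2 : Q)) ∈ A.T }
  upd_mem := fun _ ht i => A.upd_mem _ ht i

/-- The VASS `A^nv = (Q, T_nv)` where `T_nv` consists of the transitions of `A`
contained in some short cycle `γ` with `eff(γ) · nv = 0`. -/
def neutral (A : VASS d Q) (nv : Fin d → ℝ) : VASS d Q where
  T := { t ∈ A.T | ∃ n p u, A.IsShortCycle n p u ∧ dotZ (eff n u) nv = 0 ∧
          ∃ i < n, (p i, u i, p (i + 1)) = t }
  upd_mem := fun t ht i => A.upd_mem t ht.1 i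

end VASS

namespace VASS

open Finset

variable {d : ℕ} {Q : Type}

lemma dotZ_add (v w : Fin d → ℤ) (nv : Fin d → ℝ) :
    dotZ (v + w) nv = dotZ v nv + dotZ w nv := by
  simp only [dotZ, Pi.add_apply, Int.cast_add, add_mul, sum_add_distrib]

lemma dotZ_eff (n : ℕ) (u : ℕ → Fin d → ℤ) (nv : Fin d → ℝ) :
    dotZ (eff n u) nv = ∑ j ∈ range n, dotZ (u j) nv := by
  simp only [dotZ, eff, Int.cast_sum, sum_mul]
  exact sum_comm

lemma dotZ_le_sum_of_mem_T (A : VASS d Q) {nv : Fin d → ℝ} (hnv : ∀ i, 0 ≤ nv i)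
    {t : Q × (Fin d → ℤ) × Q} (ht : t ∈ A.T) : dotZ t.2.1 nv ≤ ∑ i, nv i :=
  sum_le_sum fun i _ => by
    rcases A.upd_mem t ht i with h | h | h <;> simp [h, hnv i]

lemma eff_telescope (n : ℕ) (z : ℕ → Fin d → ℕ) :
    eff n (fun j i => (z (j + 1) i : ℤ) - z j i) = fun i => (z n i : ℤ) - z 0 i := by
  funext i
  exact sum_range_sub (fun j => (z j i : ℤ)) n

lemma eff_cut {n a ℓ : ℕ} (u : ℕ → Fin d → ℤ) (han : a + ℓ ≤ n) :
    eff n u = eff (n - ℓ) (fun j => if j < a then u j else u (j + ℓ)) +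
      eff ℓ (fun j => u (a + j)) := by
  obtain ⟨r, rfl⟩ := Nat.exists_eq_add_of_le han
  funext i
  rw [show a + ℓ + r - ℓ = a + r by omega]
  have hlow : ∑ j ∈ range a, (if j < a then u j else u (j + ℓ)) i = ∑ j ∈ range a, u j i :=
    sum_congr rfl fun j hj => by rw [if_pos (mem_range.mp hj)]
  have hhigh : ∑ j ∈ range r, (if a + j < a then u (a + j) else u (a + j + ℓ)) i =
      ∑ j ∈ range r, u (a + ℓ + j) i :=
    sum_congr rfl fun j _ => by rw [if_neg (by omega), Nat.add_right_comm]
  simp only [eff, Pi.add_apply, sum_range_add, hlow, hhigh]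
  ring

section Paths

variable {A : VASS d Q} {n : ℕ} {p : ℕ → Q} {u : ℕ → Fin d → ℤ}

lemma IsPath.abs_eff_le (h : A.IsPath n p u) (i : Fin d) : |eff n u i| ≤ n :=
  calc |eff n u i| ≤ ∑ j ∈ range n, |u j i| := abs_sum_le_sum_abs _ _
    _ ≤ ∑ _j ∈ range n, 1 := sum_le_sum fun j hj => by
          rcases A.upd_mem _ (h.2 j (mem_range.mp hj)) i with h | h | h <;>
            simp only at h <;> simp [h]
    _ = n := by simp

lemma IsPath.dotZ_eff_le (h : A.IsPath n p u) {nv : Fin d → ℝ} (hnv : ∀ i, 0 ≤ nv i) :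
    dotZ (eff n u) nv ≤ n * ∑ i, nv i := by
  rw [dotZ_eff]
  calc ∑ j ∈ range n, dotZ (u j) nv ≤ ∑ _j ∈ range n, ∑ i, nv i :=
        sum_le_sum fun j hj => A.dotZ_le_sum_of_mem_T hnv (h.2 j (mem_range.mp hj))
    _ = n * ∑ i, nv i := by rw [sum_const, card_range, nsmul_eq_mul]

lemma IsPath.isShortCycle_shift (h : A.IsPath n p u) {a ℓ : ℕ} (hℓ : 1 ≤ ℓ)
    (hℓQ : ℓ ≤ Nat.card Q) (han : a + ℓ ≤ n) (hcyc : p (a + ℓ) = p a) :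
    A.IsShortCycle ℓ (fun i => p (a + i)) (fun j => u (a + j)) :=
  ⟨⟨hℓ, fun i hi => h.2 (a + i) (by omega)⟩, hcyc, hℓQ⟩

lemma IsPath.cut (h : A.IsPath n p u) {a ℓ : ℕ} (han : a + ℓ ≤ n) (hℓn : ℓ < n)
    (hcyc : p (a + ℓ) = p a) :
    A.IsPath (n - ℓ) (fun i => if i ≤ a then p i else p (i + ℓ))
      (fun j => if j < a then u j else u (j + ℓ)) := by
  refine ⟨by omega, fun i hi => ?_⟩
  by_cases hia : i < a
  · simpa [hia, hia.le, Nat.succ_le_of_lt hia] using h.2 i (by omega)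
  · have hp : (if i ≤ a then p i else p (i + ℓ)) = p (i + ℓ) := by
      split_ifs with hia'
      · obtain rfl : i = a := by omega
        exact hcyc.symm
      · rfl
    simp only [hia, if_false, hp, show ¬ (i + 1 ≤ a) by omega]
    rw [show i + 1 + ℓ = i + ℓ + 1 by omega]
    exact h.2 _ (by omega)

lemma exists_lt_le_card_apply_eq [Fintype Q] (p : ℕ → Q) :
    ∃ a b, a < b ∧ b ≤ Nat.card Q ∧ p a = p b := by
  obtain ⟨i, j, hne, heq⟩ := Fintype.exists_ne_map_eq_of_card_lt
    (fun i : Fin (Nat.card Q + 1) => p i) (by simp [Nat.card_eq_fintype_card])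
  rcases hne.lt_or_gt with h | h
  · exact ⟨i, j, h, Nat.lt_succ_iff.mp j.2, heq⟩
  · exact ⟨j, i, h, Nat.lt_succ_iff.mp i.2, heq.symm⟩

lemma IsPath.exists_eff_eq_add_mem_Inc [Fintype Q] (h : A.IsPath n p u)
    (hn : Nat.card Q < n) : ∃ m p' u' v, A.IsPath m p' u' ∧ v ∈ A.Inc ∧
      m < n ∧ n ≤ m + Nat.card Q ∧ eff n u = eff m u' + v := by
  obtain ⟨a, b, hab, hbQ, hpab⟩ := exists_lt_le_card_apply_eq p
  obtain ⟨ℓ, rfl⟩ := Nat.exists_eq_add_of_le hab.le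
  exact ⟨n - ℓ, _, _, _, h.cut (by omega) (by omega) hpab.symm,
    ⟨ℓ, _, _, h.isShortCycle_shift (by omega) (by omega) (by omega) hpab.symm, rfl⟩,
    by omega, by omega, eff_cut u (by omega)⟩

end Paths

lemma Inc_finite (A : VASS d Q) : A.Inc.Finite := by
  refine (Set.Finite.pi (t := fun _ : Fin d => Set.Icc (-(Nat.card Q : ℤ)) (Nat.card Q))
    fun _ => Set.finite_Icc _ _).subset ?_
  rintro v ⟨n, p, u, ⟨h, -, hn⟩, rfl⟩ i -
  exact abs_le.mp ((h.abs_eff_le i).trans (by exact_mod_cast hn))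

lemma exists_pos_forall_Inc_dotZ_le_neg (A : VASS d Q) {nv : Fin d → ℝ}
    (hneg : ∀ v ∈ A.Inc, dotZ v nv < 0) : ∃ ε > 0, ∀ v ∈ A.Inc, dotZ v nv ≤ -ε := by
  obtain h | hne := A.Inc.eq_empty_or_nonempty
  · exact ⟨1, one_pos, by simp [h]⟩
  obtain ⟨w, hw, hmax⟩ := Set.exists_max_image _ (fun v => dotZ v nv) A.Inc_finite hne
  exact ⟨-dotZ w nv, neg_pos.mpr (hneg w hw), fun v hv => by linarith [hmax v hv]⟩

lemma L_le_ofReal (A : VASS d Q) {m : ℕ} {b : ℝ}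
    (h : ∀ n q z, univ.sup (z 0) = m → A.IsZeroAvoiding n q z → (n : ℝ) ≤ b) :
    (A.L m : ℝ≥0∞) ≤ ENNReal.ofReal b := by
  simp only [L, Lval, ENat.toENNReal_iSup]
  refine iSup_le fun p => iSup_le fun v => iSup_le fun hv => iSup_le fun n => iSup_le ?_
  rintro ⟨q, z, -, rfl, hz⟩
  rw [ENat.toENNReal_coe, ← ENNReal.ofReal_natCast]
  exact ENNReal.ofReal_le_ofReal (h n q z hv hz)

lemma IsZeroAvoiding.isPath {A : VASS d Q} {n : ℕ} {q : ℕ → Q} {z : ℕ → Fin d → ℕ}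
    (h : A.IsZeroAvoiding n q z) (hn : 0 < n) :
    A.IsPath n q (fun j i => (z (j + 1) i : ℤ) - z j i) :=
  ⟨hn, h.2⟩

section LinearBound

variable [Fintype Q] {A : VASS d Q} {nv : Fin d → ℝ} {ε : ℝ}

/-- Equivalently, the effect of a path of length `n` has weight at most
`|Q| C + ε - ε n / |Q|`, where `C = ∑ i, nv i` bounds the weight of a single transition. -/
theorem IsPath.eps_mul_length_le (hnv : ∀ i, 0 ≤ nv i) (hε : 0 ≤ ε)
    (hInc : ∀ v ∈ A.Inc, dotZ v nv ≤ -ε) {n : ℕ} {p : ℕ → Q} {u : ℕ → Fin d → ℤ}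
    (h : A.IsPath n p u) :
    ε * n + Nat.card Q * dotZ (eff n u) nv ≤ Nat.card Q * (Nat.card Q * ∑ i, nv i + ε) := by
  induction n using Nat.strong_induction_on generalizing p u with
  | _ n ih =>
  have hQ : (0 : ℝ) ≤ Nat.card Q := Nat.cast_nonneg _
  by_cases hn : n ≤ Nat.card Q
  · have hC : 0 ≤ ∑ i, nv i := sum_nonneg fun i _ => hnv i
    have hnQ : (n : ℝ) ≤ Nat.card Q := by exact_mod_cast hn
    nlinarith [mul_le_mul_of_nonneg_left (h.dotZ_eff_le hnv) hQ,
      mul_le_mul_of_nonneg_left hnQ hε, mul_le_mul_of_nonneg_right hnQ hC]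
  · obtain ⟨m, p', u', v, h', hv, hmn, hnm, heff⟩ :=
      h.exists_eff_eq_add_mem_Inc (not_le.mp hn)
    have hnm' : (n : ℝ) ≤ m + Nat.card Q := by exact_mod_cast hnm
    rw [heff, dotZ_add]
    nlinarith [ih m hmn h', mul_le_mul_of_nonneg_left (hInc v hv) hQ,
      mul_le_mul_of_nonneg_left hnm' hε]

theorem IsZeroAvoiding.eps_mul_length_le (hnv : ∀ i, 0 ≤ nv i) (hε : 0 ≤ ε)
    (hInc : ∀ v ∈ A.Inc, dotZ v nv ≤ -ε) {n m : ℕ} {q : ℕ → Q} {z : ℕ → Fin d → ℕ}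
    (h : A.IsZeroAvoiding n q z) (hz : ∀ i, z 0 i ≤ m) :
    ε * n ≤ Nat.card Q * (Nat.card Q * ∑ i, nv i + ε) + Nat.card Q * (m * ∑ i, nv i) := by
  have hQ : (0 : ℝ) ≤ Nat.card Q := Nat.cast_nonneg _
  have hC : 0 ≤ ∑ i, nv i := sum_nonneg fun i _ => hnv i
  rcases Nat.eq_zero_or_pos n with rfl | hn
  · simp only [Nat.cast_zero, mul_zero]
    positivity
  have hpath := (h.isPath hn).eps_mul_length_le hnv hε hInc
  have hdrop : -(m * ∑ i, nv i) ≤ dotZ (fun i => (z n i : ℤ) - z 0 i) nv := by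
    rw [mul_sum, ← sum_neg_distrib]
    refine sum_le_sum fun i _ => ?_
    have hz0 : (z 0 i : ℝ) ≤ m := by exact_mod_cast hz i
    push_cast
    nlinarith [mul_nonneg (by positivity : (0 : ℝ) ≤ z n i) (hnv i),
      mul_le_mul_of_nonneg_right hz0 (hnv i)]
  rw [eff_telescope] at hpath
  nlinarith [mul_le_mul_of_nonneg_left hdrop hQ]

end LinearBound

end VASS

theorem stmt0_general {d : ℕ} {Q : Type} [Fintype Q] (A : VASS d Q)
    (nv : Fin d → ℝ) (hpos : ∀ i, 0 < nv i)
    (hneg : ∀ v ∈ A.Inc, VASS.dotZ v nv < 0) :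
    ∃ a : ℝ, 0 < a ∧ ∃ N : ℕ, ∀ m : ℕ, N ≤ m →
      (A.L m : ℝ≥0∞) ≤ ENNReal.ofReal (a * m) := by
  have hnv : ∀ i, 0 ≤ nv i := fun i => (hpos i).le
  obtain ⟨ε, hε, hInc⟩ := A.exists_pos_forall_Inc_dotZ_le_neg hneg
  set C := ∑ i, nv i
  set K : ℝ := (Nat.card Q : ℝ)
  have hC : 0 ≤ C := Finset.sum_nonneg fun i _ => hnv i
  set c := K * (K * C + ε + C) / ε
  have hcε : c * ε = K * (K * C + ε + C) := div_mul_cancel₀ _ hε.ne'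
  have hc : 0 ≤ c := by positivity
  refine ⟨c + 1, by linarith, 1, fun m hm => A.L_le_ofReal fun n q z hz hza => ?_⟩
  have hm : (1 : ℝ) ≤ m := by exact_mod_cast hm
  have hlen := hza.eps_mul_length_le hnv hε.le hInc fun i =>
    hz ▸ Finset.le_sup (Finset.mem_univ i)
  have hKε : 0 ≤ K * (K * C + ε) := by positivity
  calc (n : ℝ) ≤ c * m :=
        le_of_mul_le_mul_left (by nlinarith [mul_le_mul_of_nonneg_left hm hKε]) hε
    _ ≤ (c + 1) * m := by nlinarith

/-- if there is a componentwise positive `nv` with `v · nv < 0` for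
every `v ∈ Inc(A)`, then the termination complexity of `A` is `O(n)`. -/
theorem stmt0 {d : ℕ} {Q : Type} [Fintype Q] [Nonempty Q] (A : VASS d Q)
    (nv : Fin d → ℝ) (hpos : ∀ i, 0 < nv i)
    (hneg : ∀ v ∈ A.Inc, VASS.dotZ v nv < 0) :
    ∃ a : ℝ, 0 < a ∧ ∃ N : ℕ, ∀ m : ℕ, N ≤ m →
      (A.L m : ℝ≥0∞) ≤ ENNReal.ofReal (a * m) :=
  stmt0_general A nv hpos hneg
end

section
/- Let A = (Q,T) be a d-dimensional VASS. Then 𝓛_A(n) ∈ O(n) if and only if for every strongly connected component R of A, the termination complexity 𝓛_R(n) of the restricted VASS A_R is in O(n). -/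
open scoped BigOperators ENNReal

/-!
A zero-avoiding computation from `p v` stays in the SCC of `p` until its last visit there, and
by the bound for that SCC this prefix has length linear in the size of `v`. Afterwards it never
returns to `p`, so the remaining computation visits fewer states, and it starts at size at most
`size v` plus the prefix length, since every step changes a counter by at most one. Induction on
the number of visited states gives a linear bound whose constant is exponential in `|Q|`.
Conversely, computations of `A_R` are computations of `A`. For `d > 0`, shifting all counters
by a constant turns the eventual bounds of `O(n)` into bounds `n ≤ K (size + K)` valid at every
size.
-/

namespace VASS

variable {d : ℕ} {Q : Type} {A : VASS d Q}

def size (v : Fin d → ℕ) : ℕ := Finset.univ.sup v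

lemma le_size (v : Fin d → ℕ) (i : Fin d) : v i ≤ size v :=
  Finset.le_sup (Finset.mem_univ i)

lemma size_le_iff {v : Fin d → ℕ} {k : ℕ} : size v ≤ k ↔ ∀ i, v i ≤ k := by
  simp [size]

lemma Reaches.trans {p q r : Q} (hpq : A.Reaches p q) (hqr : A.Reaches q r) :
    A.Reaches p r := by
  obtain ⟨n₁, p₁, u₁, ⟨hn₁, hp₁⟩, hs₁, he₁⟩ := hpq
  obtain ⟨n₂, p₂, u₂, ⟨hn₂, hp₂⟩, hs₂, he₂⟩ := hqr
  refine ⟨n₁ + n₂, fun i => if i < n₁ then p₁ i else p₂ (i - n₁),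
    fun i => if i < n₁ then u₁ i else u₂ (i - n₁), ⟨by omega, fun i hi => ?_⟩,
    by simp [show 0 < n₁ by omega, hs₁], by simp [he₂]⟩
  by_cases hi₁ : i < n₁
  · by_cases hi₁' : i + 1 < n₁
    · simpa [hi₁, hi₁'] using hp₁ i hi₁
    · obtain rfl : n₁ = i + 1 := by omega
      simpa [hs₂, he₁] using hp₁ i hi₁
  · have e : i + 1 - n₁ = i - n₁ + 1 := by omega
    simpa [hi₁, show ¬i + 1 < n₁ by omega, e] using hp₂ (i - n₁) (by omega)

def sccOf (A : VASS d Q) (p : Q) : Set Q :=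
  {q | q = p ∨ A.Reaches p q ∧ A.Reaches q p}

lemma mem_sccOf_self (A : VASS d Q) (p : Q) : p ∈ A.sccOf p := Or.inl rfl

lemma isSCC_sccOf (A : VASS d Q) (p : Q) : A.IsSCC (A.sccOf p) := by
  refine ⟨?_, fun S hsub hS => (Set.Subset.antisymm · hsub) fun s hs => ?_⟩
  · rintro q (rfl | ⟨-, hqp⟩) r (rfl | ⟨hpr, -⟩) hne
    exacts [absurd rfl hne, hpr, hqp, hqp.trans hpr]
  · by_cases hsp : s = p
    · exact Or.inl hsp
    · have hp := hsub (A.mem_sccOf_self p)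
      exact Or.inr ⟨hS p hp s hs (Ne.symm hsp), hS s hs p hp hsp⟩

namespace IsZeroAvoiding

variable {n : ℕ} {q : ℕ → Q} {z : ℕ → Fin d → ℕ}

lemma take (h : A.IsZeroAvoiding n q z) {k : ℕ} (hk : k ≤ n) : A.IsZeroAvoiding k q z :=
  ⟨fun i hi => h.1 i (hi.trans hk), fun i hi => h.2 i (hi.trans_le hk)⟩

lemma drop (h : A.IsZeroAvoiding n q z) {k : ℕ} (hk : k ≤ n) :
    A.IsZeroAvoiding (n - k) (fun t => q (k + t)) (fun t => z (k + t)) :=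
  ⟨fun i hi => h.1 (k + i) (by omega), fun i hi => h.2 (k + i) (by omega)⟩

lemma add_const (h : A.IsZeroAvoiding n q z) (c : ℕ) :
    A.IsZeroAvoiding n q (fun t i => z t i + c) := by
  refine ⟨fun i hi j => Nat.add_pos_left (h.1 i hi j) c, fun i hi => ?_⟩
  convert h.2 i hi using 4
  push_cast
  ring

lemma coord_succ_le (h : A.IsZeroAvoiding n q z) {t : ℕ} (ht : t < n) (i : Fin d) :
    z (t + 1) i ≤ z t i + 1 := by
  rcases A.upd_mem _ (h.2 t ht) i with h' | h' | h' <;> simp only at h' <;> omega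

lemma size_le (h : A.IsZeroAvoiding n q z) {t : ℕ} (ht : t ≤ n) :
    size (z t) ≤ size (z 0) + t := by
  suffices ∀ i, z t i ≤ z 0 i + t from
    size_le_iff.2 fun i => (this i).trans (by have := le_size (z 0) i; omega)
  intro i
  induction t with
  | zero => simp
  | succ t ih => have := h.coord_succ_le ht i; have := ih (by omega); omega

lemma reaches (h : A.IsZeroAvoiding n q z) {i j : ℕ} (hij : i < j) (hj : j ≤ n) :
    A.Reaches (q i) (q j) :=
  ⟨j - i, fun t => q (i + t), fun t k => (z (i + t + 1) k : ℤ) - z (i + t) k,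
    ⟨by omega, fun t ht => h.2 (i + t) (by omega)⟩, by simp, congrArg q (by omega)⟩

lemma mem_sccOf (h : A.IsZeroAvoiding n q z) {t j : ℕ} (ht : t ≤ j) (hj : j ≤ n)
    (hqj : q j ∈ A.sccOf (q 0)) : q t ∈ A.sccOf (q 0) := by
  rcases Nat.eq_zero_or_pos t with rfl | ht₀
  · exact A.mem_sccOf_self _
  rcases ht.eq_or_lt with rfl | htj
  · exact hqj
  have hback : A.Reaches (q t) (q 0) := by
    rcases hqj with hqj | ⟨-, hqj⟩
    · exact hqj ▸ h.reaches htj hj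
    · exact (h.reaches htj hj).trans hqj
  exact Or.inr ⟨h.reaches ht₀ (by omega), hback⟩

lemma toRestrict (h : A.IsZeroAvoiding n q z) {R : Set Q} (hR : ∀ t ≤ n, q t ∈ R) :
    (A.restrict R).IsZeroAvoiding n (fun t => ⟨q (min t n), hR _ (min_le_right t n)⟩) z := by
  refine ⟨h.1, fun i hi => ?_⟩
  show (q (min i n), _, q (min (i + 1) n)) ∈ A.T
  rw [min_eq_left hi.le, min_eq_left hi]
  exact h.2 i hi

lemma ofRestrict {R : Set Q} {q : ℕ → R} (h : (A.restrict R).IsZeroAvoiding n q z) :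
    A.IsZeroAvoiding n (fun t => q t) z :=
  h

end IsZeroAvoiding

lemma L_le_iff {m : ℕ} {k : ℕ∞} :
    A.L m ≤ k ↔
      ∀ n q z, A.IsZeroAvoiding n q z → size (z 0) = m → (n : ℕ∞) ≤ k := by
  simp only [L, Lval, iSup_le_iff]
  constructor
  · rintro hL n q z h rfl
    exact hL (q 0) (z 0) rfl n ⟨q, z, rfl, rfl, h⟩
  · rintro hL p v rfl n ⟨q, z, -, rfl, h⟩
    exact hL n q z h rfl

def LinearlyTerminating (A : VASS d Q) : Prop :=
  ∃ C N : ℕ, ∀ n q z, A.IsZeroAvoiding n q z → N ≤ size (z 0) → n ≤ C * size (z 0)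

theorem exists_L_le_iff_linearlyTerminating :
    (∃ a : ℝ, 0 < a ∧ ∃ N : ℕ, ∀ m : ℕ, N ≤ m →
        (A.L m : ℝ≥0∞) ≤ ENNReal.ofReal (a * m)) ↔ A.LinearlyTerminating := by
  constructor
  · rintro ⟨a, ha, N, hL⟩
    refine ⟨⌈a⌉₊, N, fun n q z h hN => ?_⟩
    have hn : (n : ℝ≥0∞) ≤ ENNReal.ofReal (a * size (z 0)) :=
      le_trans (by exact_mod_cast L_le_iff.1 le_rfl n q z h rfl) (hL _ hN)
    rw [← ENNReal.ofReal_natCast, ENNReal.ofReal_le_ofReal_iff (by positivity)] at hn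
    have : (n : ℝ) ≤ ⌈a⌉₊ * size (z 0) := hn.trans (by gcongr; exact Nat.le_ceil a)
    exact_mod_cast this
  · rintro ⟨C, N, hC⟩
    refine ⟨C + 1, by positivity, N, fun m hm => ?_⟩
    have hL : A.L m ≤ (C * m : ℕ) :=
      L_le_iff.2 fun n q z h hz => by exact_mod_cast (hC n q z h (hz ▸ hm)).trans_eq (by rw [hz])
    calc (A.L m : ℝ≥0∞) ≤ ((C * m : ℕ) : ℝ≥0∞) := by exact_mod_cast hL
      _ = ENNReal.ofReal (C * m) := by rw [← ENNReal.ofReal_natCast]; push_cast; rfl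
      _ ≤ ENNReal.ofReal ((C + 1) * m) := by gcongr; linarith

lemma LinearlyTerminating.restrict (h : A.LinearlyTerminating) (R : Set Q) :
    (A.restrict R).LinearlyTerminating := by
  obtain ⟨C, N, hC⟩ := h
  exact ⟨C, N, fun n q z h => hC n _ z h.ofRestrict⟩

def LengthBoundedBy (A : VASS d Q) (K : ℕ) : Prop :=
  ∀ n q z, A.IsZeroAvoiding n q z → n ≤ K * (size (z 0) + K)

lemma LengthBoundedBy.mono {K M : ℕ} (h : A.LengthBoundedBy K) (hKM : K ≤ M) :
    A.LengthBoundedBy M :=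
  fun n q z hz => (h n q z hz).trans (by gcongr)

lemma LinearlyTerminating.exists_lengthBoundedBy (hd : 0 < d) (h : A.LinearlyTerminating) :
    ∃ K, A.LengthBoundedBy K := by
  obtain ⟨C, N, hC⟩ := h
  refine ⟨max C N, fun n q z h => ?_⟩
  -- raising every counter by `N` brings the initial size above the threshold `N`
  have hlow : N ≤ size (fun i => z 0 i + N) :=
    (Nat.le_add_left N (z 0 ⟨0, hd⟩)).trans (le_size (fun i => z 0 i + N) ⟨0, hd⟩)
  have hup : size (fun i => z 0 i + N) ≤ size (z 0) + N :=
    size_le_iff.2 fun i => by simpa using le_size (z 0) i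
  calc n ≤ C * size (fun i => z 0 i + N) := hC n q _ (h.add_const N) hlow
    _ ≤ max C N * (size (z 0) + max C N) := by
      gcongr
      · exact le_max_left C N
      · exact hup.trans (by gcongr; exact le_max_right C N)

lemma IsZeroAvoiding.length_le_of_forall_scc {K : ℕ}
    (hK : ∀ R, A.IsSCC R → (A.restrict R).LengthBoundedBy K) {s : ℕ} {S : Finset Q}
    (hS : S.card ≤ s) {n : ℕ} {q : ℕ → Q} {z : ℕ → Fin d → ℕ}
    (h : A.IsZeroAvoiding n q z) (hq : ∀ t ≤ n, q t ∈ S) :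
    n ≤ (2 * K + 3) ^ s * (size (z 0) + K + 1) := by
  classical
  induction s generalizing S n q z with
  | zero => exact absurd (hq 0 n.zero_le) (by simp [Finset.card_eq_zero.1 (Nat.le_zero.1 hS)])
  | succ s ih =>
    -- `j` is the last visit to the SCC of `q 0`: the computation stays in that SCC up to `j`
    -- and never visits `q 0` again afterwards
    set R := A.sccOf (q 0)
    set j := Nat.findGreatest (fun t => q t ∈ R) n
    have hjn : j ≤ n := Nat.findGreatest_le n
    have hjR : q j ∈ R :=
      Nat.findGreatest_spec (P := (q · ∈ R)) n.zero_le (A.mem_sccOf_self (q 0))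
    have hprefix : j ≤ K * (size (z 0) + K) :=
      hK R (A.isSCC_sccOf _) j _ z ((h.take hjn).toRestrict fun t ht => h.mem_sccOf ht hjn hjR)
    have hsuffix : n - (j + 1) ≤ (2 * K + 3) ^ s * (size (z 0) + j + 1 + K + 1) := by
      rcases Nat.lt_or_ge j n with hj | hj
      · have hS' : ∀ t ≤ n - (j + 1), q (j + 1 + t) ∈ S.erase (q 0) := fun t ht =>
          Finset.mem_erase.2 ⟨fun he => Nat.findGreatest_is_greatest (P := (q · ∈ R))
            (show j < j + 1 + t by omega) (by omega) (he ▸ A.mem_sccOf_self _), hq _ (by omega)⟩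
        calc n - (j + 1) ≤ (2 * K + 3) ^ s * (size (z (j + 1)) + K + 1) :=
              ih (by rw [Finset.card_erase_of_mem (hq 0 n.zero_le)]; omega) (h.drop hj) hS'
          _ ≤ _ := by have := h.size_le hj; gcongr; omega
      · simp [Nat.sub_eq_zero_of_le (show n ≤ j + 1 by omega)]
    have hP : 1 ≤ (2 * K + 3) ^ s := Nat.one_le_pow _ _ (by omega)
    have hj : j + 1 ≤ (K + 1) * (size (z 0) + K + 1) := by nlinarith
    calc n ≤ (j + 1) + (2 * K + 3) ^ s * (size (z 0) + j + 1 + K + 1) := by omega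
      _ ≤ (2 * K + 3) ^ s * ((K + 1) * (size (z 0) + K + 1))
          + (2 * K + 3) ^ s * ((K + 2) * (size (z 0) + K + 1)) := by
        gcongr
        · exact hj.trans (Nat.le_mul_of_pos_left _ hP)
        · nlinarith
      _ = (2 * K + 3) ^ (s + 1) * (size (z 0) + K + 1) := by ring

theorem linearlyTerminating_of_forall_scc [Fintype Q] (hd : 0 < d)
    (h : ∀ R, A.IsSCC R → (A.restrict R).LinearlyTerminating) : A.LinearlyTerminating := by
  have : ∀ R : Set Q, ∃ K, A.IsSCC R → (A.restrict R).LengthBoundedBy K := fun R => by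
    by_cases hR : A.IsSCC R
    · obtain ⟨K, hK⟩ := (h R hR).exists_lengthBoundedBy hd
      exact ⟨K, fun _ => hK⟩
    · exact ⟨0, fun h => absurd h hR⟩
  choose K hK using this
  obtain ⟨M, hM⟩ := Finite.exists_le K
  have hKM : ∀ R, A.IsSCC R → (A.restrict R).LengthBoundedBy M :=
    fun R hR => (hK R hR).mono (hM R)
  refine ⟨(2 * M + 3) ^ Fintype.card Q * (M + 2), 1, fun n q z hz hm => ?_⟩
  calc n ≤ (2 * M + 3) ^ Fintype.card Q * (size (z 0) + M + 1) :=
        hz.length_le_of_forall_scc hKM (S := Finset.univ) le_rfl fun _ _ => Finset.mem_univ _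
    _ ≤ _ := by rw [mul_assoc]; gcongr; nlinarith

end VASS

theorem stmt2_general {d : ℕ} {Q : Type} [Fintype Q] (A : VASS d Q) :
    (∃ a : ℝ, 0 < a ∧ ∃ N : ℕ, ∀ m : ℕ, N ≤ m →
        (A.L m : ℝ≥0∞) ≤ ENNReal.ofReal (a * m)) ↔
    (∀ R : Set Q, A.IsSCC R →
        ∃ a : ℝ, 0 < a ∧ ∃ N : ℕ, ∀ m : ℕ, N ≤ m →
          ((A.restrict R).L m : ℝ≥0∞) ≤ ENNReal.ofReal (a * m)) := by
  simp only [VASS.exists_L_le_iff_linearlyTerminating]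
  refine ⟨fun h R _ => h.restrict R, fun h => ?_⟩
  rcases Nat.eq_zero_or_pos d with rfl | hd
  · exact ⟨0, 1, fun n q z _ hm => absurd hm (by simp [VASS.size])⟩
  · exact VASS.linearlyTerminating_of_forall_scc hd h

/-- `𝓛_A(n) ∈ O(n)` iff for every SCC `R` of `A`, the termination
complexity of the restricted VASS `A_R` is in `O(n)`. -/
theorem stmt2 {d : ℕ} {Q : Type} [Fintype Q] [Nonempty Q] (A : VASS d Q) :
    (∃ a : ℝ, 0 < a ∧ ∃ N : ℕ, ∀ m : ℕ, N ≤ m →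
        (A.L m : ℝ≥0∞) ≤ ENNReal.ofReal (a * m)) ↔
    (∀ R : Set Q, A.IsSCC R →
        ∃ a : ℝ, 0 < a ∧ ∃ N : ℕ, ∀ m : ℕ, N ≤ m →
          ((A.restrict R).L m : ℝ≥0∞) ≤ ENNReal.ofReal (a * m)) :=
  stmt2_general A
end

section
/- Let V ⊆ ℝ^d be a finite set of vectors. If there is no nonzero componentwise non-negative vector n ∈ ℝ^d with v · n ≤ 0 for all v ∈ V, then there exists a componentwise positive vector u ∈ cone(V). -/
open scoped BigOperators

/-- Scalar product of two real vectors. -/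
def dotR {d : ℕ} (v w : Fin d → ℝ) : ℝ := ∑ i, v i * w i

/-- The cone generated by a finite set of real vectors: all non-negative
linear combinations of elements of `V`. -/
def coneF {d : ℕ} (V : Finset (Fin d → ℝ)) : Set (Fin d → ℝ) :=
  { x | ∃ c : (Fin d → ℝ) → ℝ, (∀ v ∈ V, 0 ≤ c v) ∧ x = ∑ v ∈ V, c v • v }

/-!
Suppose `cone(V)` misses the open positive orthant. Both sets are convex and the orthant is open,
so Hahn–Banach separates them by a linear functional `f`; since `cone(V)` is a cone containing `0`,
`f ≥ 0` on `cone(V)` and `f < 0` on the orthant. Writing `f = · ⬝ c`, negativity on the open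
orthant forces `c ≤ 0` and `c ≠ 0`, so `n = -c` is a forbidden vector.
-/

section Separation

variable {E : Type*} [TopologicalSpace E] [AddCommGroup E] [Module ℝ E]
  [IsTopologicalAddGroup E] [ContinuousSMul ℝ E]

theorem exists_nonneg_on_cone_neg_on_open {K U : Set E} (hK : Convex ℝ K) (hK₀ : (0 : E) ∈ K)
    (hK_smul : ∀ x ∈ K, ∀ t : ℝ, 0 ≤ t → t • x ∈ K) (hU : Convex ℝ U) (hU_open : IsOpen U)
    (hKU : Disjoint U K) :
    ∃ f : StrongDual ℝ E, (∀ x ∈ K, 0 ≤ f x) ∧ ∀ x ∈ U, f x < 0 := by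
  obtain ⟨f, s, hfU, hfK⟩ := geometric_hahn_banach_open hU hU_open hK hKU
  have hs : s ≤ 0 := by simpa using hfK 0 hK₀
  refine ⟨f, fun x hx => ?_, fun x hx => (hfU x hx).trans_le hs⟩
  by_contra! hneg
  -- scaling `x` by `(s - 1) / f x ≥ 0` would push `f` below `s` on `K`
  have := hfK _ (hK_smul x hx ((s - 1) / f x) (div_nonneg_of_nonpos (by linarith) hneg.le))
  rw [map_smul, smul_eq_mul, div_mul_cancel₀ _ hneg.ne] at this
  linarith

end Separation

section Orthant

variable {d : ℕ}

theorem dotR_neg_right (v w : Fin d → ℝ) : dotR v (-w) = -dotR v w := by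
  simp only [dotR, Pi.neg_apply, mul_neg, Finset.sum_neg_distrib]

theorem dotR_add_left (u v w : Fin d → ℝ) : dotR (u + v) w = dotR u w + dotR v w := by
  simp only [dotR, Pi.add_apply, add_mul, Finset.sum_add_distrib]

theorem dotR_single_left (i : Fin d) (t : ℝ) (w : Fin d → ℝ) : dotR (Pi.single i t) w = t * w i := by
  simp [dotR, Pi.single_apply]

theorem LinearMap.apply_eq_dotR_single (f : (Fin d → ℝ) →ₗ[ℝ] ℝ) (x : Fin d → ℝ) :
    f x = dotR x fun i => f (Pi.single i 1) := by
  rw [f.pi_apply_eq_sum_univ x, dotR]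
  refine Finset.sum_congr rfl fun i _ => ?_
  rw [smul_eq_mul]
  congr 2
  ext j
  simp [Pi.single_apply, eq_comm]

theorem nonpos_of_dotR_neg_of_pos {c : Fin d → ℝ} (hc : ∀ x, (∀ i, 0 < x i) → dotR x c < 0)
    (i : Fin d) : c i ≤ 0 := by
  by_contra! hci
  have hone : dotR (fun _ => 1) c < 0 := hc _ fun _ => one_pos
  -- `t • eᵢ + 𝟙` is positive but has `c`-value exactly `0`
  set t := -dotR (fun _ => 1) c / c i
  have ht : 0 < t := div_pos (by linarith) hci
  have hpos : ∀ j, 0 < (Pi.single i t + fun _ => 1 : Fin d → ℝ) j := fun j => by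
    rcases eq_or_ne j i with rfl | hj <;> simp [*, add_pos]
  have := hc _ hpos
  rw [dotR_add_left, dotR_single_left, div_mul_cancel₀ _ hci.ne'] at this
  linarith

theorem ne_zero_of_dotR_neg_of_pos {c : Fin d → ℝ} (hc : ∀ x, (∀ i, 0 < x i) → dotR x c < 0) :
    c ≠ 0 := by
  rintro rfl
  simpa [dotR] using hc (fun _ => 1) fun _ => one_pos

end Orthant

section Cone

variable {d : ℕ} (V : Finset (Fin d → ℝ))

theorem convex_coneF : Convex ℝ (coneF V) := by
  rintro x ⟨c, hc, rfl⟩ y ⟨c', hc', rfl⟩ a b ha hb -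
  refine ⟨fun v => a * c v + b * c' v, fun v hv =>
    add_nonneg (mul_nonneg ha (hc v hv)) (mul_nonneg hb (hc' v hv)), ?_⟩
  simp only [Finset.smul_sum, ← Finset.sum_add_distrib, add_smul, smul_smul]

theorem zero_mem_coneF : (0 : Fin d → ℝ) ∈ coneF V :=
  ⟨0, fun _ _ => le_rfl, by simp⟩

theorem smul_mem_coneF {x : Fin d → ℝ} (hx : x ∈ coneF V) {t : ℝ} (ht : 0 ≤ t) :
    t • x ∈ coneF V := by
  obtain ⟨c, hc, rfl⟩ := hx
  exact ⟨t • c, fun v hv => mul_nonneg ht (hc v hv), by simp only [Finset.smul_sum, smul_smul,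
    Pi.smul_apply, smul_eq_mul]⟩

theorem mem_coneF_of_mem {v : Fin d → ℝ} (hv : v ∈ V) : v ∈ coneF V := by
  classical
  refine ⟨Pi.single v 1, fun w _ => ?_, ?_⟩
  · rcases eq_or_ne w v with rfl | h <;> simp [*]
  · rw [Finset.sum_eq_single v (fun w _ h => by simp [h]) (absurd hv)]
    simp

end Cone

/-- if there is no nonzero componentwise non-negative `n` with
`v · n ≤ 0` on `V`, then `cone(V)` contains a componentwise positive vector. -/
theorem stmt9 {d : ℕ} (V : Finset (Fin d → ℝ))
    (h : ¬ ∃ n : Fin d → ℝ, n ≠ 0 ∧ (∀ i, 0 ≤ n i) ∧ ∀ v ∈ V, dotR v n ≤ 0) :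
    ∃ u ∈ coneF V, ∀ i, 0 < u i := by
  by_contra hu
  apply h
  have hdisj : Disjoint (Set.univ.pi fun _ => Set.Ioi 0) (coneF V) :=
    Set.disjoint_left.2 fun x hx hxK => hu ⟨x, hxK, by simpa using hx⟩
  obtain ⟨f, hfK, hfU⟩ := exists_nonneg_on_cone_neg_on_open (convex_coneF V) (zero_mem_coneF V)
    (fun x hx t ht => smul_mem_coneF V hx ht) (convex_pi fun _ _ => convex_Ioi 0)
    (isOpen_set_pi Set.finite_univ fun _ _ => isOpen_Ioi) hdisj
  set c : Fin d → ℝ := fun i => f (Pi.single i 1)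
  have hf : ∀ x, f x = dotR x c := f.toLinearMap.apply_eq_dotR_single
  have hc : ∀ x, (∀ i, 0 < x i) → dotR x c < 0 := fun x hx => hf x ▸ hfU x (by simpa using hx)
  refine ⟨-c, neg_ne_zero.2 (ne_zero_of_dotR_neg_of_pos hc),
    fun i => neg_nonneg.2 (nonpos_of_dotR_neg_of_pos hc i), fun v hv => ?_⟩
  rw [dotR_neg_right, ← hf, neg_nonpos]
  exact hfK v (mem_coneF_of_mem V hv)
end

section
/- Consider the 4-dimensional VASS A = (Q,T) with Q = {q_1,q_2,q_3,q_4} and T = {(q_1,(−1,1,0,0),q_2), (q_2,(0,1,0,0),q_1), (q_1,(0,0,0,0),q_3), (q_3,(0,0,−1,0),q_1), (q_3,(1,−1,0,0),q_3), (q_1,(0,0,0,0),q_4), (q_4,(0,0,0,−1),q_1), (q_4,(1,−1,1,0),q_4)}. Then A satisfies condition (D) and its termination complexity is non-elementary: defining the tower function by Tow(0,m) = m and Tow(k+1,m) = 2^{Tow(k,m)}, for all sufficiently large n there is a zero-avoiding computation initiated in q_1(n,n,n,n) of length at least n · Tow(n,n); in particular 𝓛(n) ≥ n · Tow(n,n)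 for all sufficiently large n. -/
open scoped BigOperators ENNReal

/-- The concrete 4-dimensional VASS of Fig. 6 (states: `q_i` is `i-1 : Fin 4`). -/
def A18 : VASS 4 (Fin 4) where
  T := {(0, ![-1, 1, 0, 0], 1), (1, ![0, 1, 0, 0], 0),
        (0, ![0, 0, 0, 0], 2), (2, ![0, 0, -1, 0], 0), (2, ![1, -1, 0, 0], 2),
        (0, ![0, 0, 0, 0], 3), (3, ![0, 0, 0, -1], 0), (3, ![1, -1, 1, 0], 3)}
  upd_mem := by
    intro t ht i
    simp only [Set.mem_insert_iff, Set.mem_singleton_iff] at ht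
    rcases ht with rfl | rfl | rfl | rfl | rfl | rfl | rfl | rfl <;> fin_cases i <;> simp

/-- The tower function: `Tow 0 m = m` and `Tow (k+1) m = 2 ^ Tow k m`. -/
def Tow : ℕ → ℕ → ℕ
  | 0, m => m
  | k + 1, m => 2 ^ Tow k m

/-!
The cycle `q₁ q₂ q₁` trades one unit of `x₁` for two units of `x₂`, and the loop at `q₃`
moves `x₂` back to `x₁`; so a visit of `q₃`, paid for with one unit of `x₃`, doubles `x₁`.
The loop at `q₄` moves `x₂` to `x₁` while refilling `x₃` by the same amount, so a visit of
`q₄`, paid for with one unit of `x₄`, turns `x₁ = a + 1` into `2 ^ (2a) * 2a + 1`. Starting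
from `q₁(n,n,n,n)`, the `n - 1` units of `x₄` build a tower of height `n`, and since `x₁`
grows by at most one per step, the computation is at least that long. As for the normals,
the short cycles with effects `(1,-1,0,0)` and `(-1,2,0,0)` sum to `(0,1,0,0)`, which rules
out a positive normal, while no transition increments `x₄`, so `e₄` is a normal.
-/

open Relation

namespace VASS

variable {d : ℕ} {Q : Type}

def Step (A : VASS d Q) (c c' : Q × (Fin d → ℕ)) : Prop :=
  (∀ j, 0 < c'.2 j) ∧ (c.1, (fun j => (c'.2 j : ℤ) - c.2 j), c'.1) ∈ A.T

lemma Step.of_mem {A : VASS d Q} {p p' : Q} {u : Fin d → ℤ} {v v' : Fin d → ℕ}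
    (ht : (p, u, p') ∈ A.T) (hv : ∀ j, (v' j : ℤ) = v j + u j) (hpos : ∀ j, 0 < v' j) :
    A.Step (p, v) (p', v') := by
  refine ⟨hpos, ?_⟩
  convert ht using 3
  funext j
  simp [hv j]

lemma exists_isZeroAvoiding_of_reflTransGen {A : VASS d Q} {c c' : Q × (Fin d → ℕ)}
    (hc : ∀ j, 0 < c.2 j) (h : ReflTransGen A.Step c c') :
    ∃ n, ∃ f : ℕ → Q × (Fin d → ℕ), f 0 = c ∧ f n = c' ∧
      A.IsZeroAvoiding n (fun i => (f i).1) (fun i => (f i).2) := by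
  induction h with
  | refl =>
    exact ⟨0, fun _ => c, rfl, rfl, fun i hi => by simpa [Nat.le_zero.1 hi] using hc, by simp⟩
  | @tail b c' _ hbc ih =>
    obtain ⟨n, f, hf0, hfn, hpos, hstep⟩ := ih
    refine ⟨n + 1, Function.update f (n + 1) c', by simpa using hf0, by simp, ?_, ?_⟩
    · intro i hi
      rcases (Nat.lt_or_eq_of_le hi) with hi | rfl
      · simpa [Function.update_of_ne hi.ne] using hpos i (by omega)
      · simpa using hbc.1
    · intro i hi
      rcases (Nat.lt_succ_iff_lt_or_eq.1 hi) with hi | rfl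
      · simpa [Function.update_of_ne (by omega : i ≠ n + 1),
          Function.update_of_ne (by omega : i + 1 ≠ n + 1)] using hstep i hi
      · simpa [Function.update_of_ne (Nat.succ_ne_self i).symm, hfn] using hbc.2

lemma IsZeroAvoiding.le_add {A : VASS d Q} {n : ℕ} {q : ℕ → Q} {z : ℕ → Fin d → ℕ}
    (h : A.IsZeroAvoiding n q z) (j : Fin d) : ∀ i ≤ n, z i j ≤ z 0 j + i
  | 0, _ => le_rfl
  | i + 1, hi => by
    have hstep := A.upd_mem _ (h.2 i (by omega)) j
    have := h.le_add j i (by omega)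
    simp only at hstep
    omega

lemma le_L_of_isZeroAvoiding {A : VASS d Q} {n m : ℕ} {q : ℕ → Q} {z : ℕ → Fin d → ℕ}
    (h : A.IsZeroAvoiding n q z) (hm : Finset.univ.sup (z 0) = m) : (n : ℕ∞) ≤ A.L m :=
  calc (n : ℕ∞) ≤ A.Lval (q 0) (z 0) := le_iSup₂_of_le n ⟨q, z, rfl, rfl, h⟩ le_rfl
    _ ≤ A.L m := le_iSup₂_of_le (q 0) (z 0) (le_iSup_of_le hm le_rfl)

lemma mem_Inc_of_loop {A : VASS d Q} [Finite Q] {p : Q} {u : Fin d → ℤ}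
    (ht : (p, u, p) ∈ A.T) : u ∈ A.Inc := by
  have : Nonempty Q := ⟨p⟩
  exact ⟨1, fun _ => p, fun _ => u, ⟨⟨le_rfl, fun _ _ => ht⟩, rfl, Nat.card_pos⟩,
    funext fun _ => by simp [eff]⟩

lemma add_mem_Inc_of_two_cycle {A : VASS d Q} [Finite Q] {p p' : Q} (hp : p ≠ p')
    {u u' : Fin d → ℤ} (ht : (p, u, p') ∈ A.T) (ht' : (p', u', p) ∈ A.T) :
    u + u' ∈ A.Inc := by
  have : Nontrivial Q := ⟨p, p', hp⟩
  refine ⟨2, fun i => if i % 2 = 0 then p else p', fun i => if i % 2 = 0 then u else u',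
    ⟨⟨by omega, fun i hi => ?_⟩, rfl, Finite.one_lt_card⟩, ?_⟩
  · interval_cases i <;> simpa
  · funext j
    simp [eff, Finset.sum_range_succ]

lemma single_mem_Normals {A : VASS d Q} {j : Fin d} (h : ∀ t ∈ A.T, t.2.1 j ≤ 0) :
    Pi.single j 1 ∈ A.Normals := by
  refine ⟨by simp, ?_⟩
  rintro _ ⟨n, p, u, hcyc, rfl⟩
  have : eff n u j ≤ 0 := Finset.sum_nonpos fun i hi =>
    h _ (hcyc.1.2 i (Finset.mem_range.1 hi))
  simpa [dotZ, Pi.single_apply] using this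

end VASS

namespace A18

local infix:50 " ⟶* " => ReflTransGen A18.Step

variable {a b c k : ℕ}

lemma step_q1_q2 (ha : 0 < a) (hc : 0 < c) (hk : 0 < k) :
    A18.Step (0, ![a + 1, b, c, k]) (1, ![a, b + 1, c, k]) :=
  .of_mem (u := ![-1, 1, 0, 0]) (by simp [A18]) (by simp [Fin.forall_fin_succ])
    (by simp [Fin.forall_fin_succ, *])

lemma step_q2_q1 (ha : 0 < a) (hc : 0 < c) (hk : 0 < k) :
    A18.Step (1, ![a, b, c, k]) (0, ![a, b + 1, c, k]) :=
  .of_mem (u := ![0, 1, 0, 0]) (by simp [A18]) (by simp [Fin.forall_fin_succ])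
    (by simp [Fin.forall_fin_succ, *])

lemma step_q1_q3 (ha : 0 < a) (hb : 0 < b) (hc : 0 < c) (hk : 0 < k) :
    A18.Step (0, ![a, b, c, k]) (2, ![a, b, c, k]) :=
  .of_mem (u := ![0, 0, 0, 0]) (by simp [A18]) (by simp [Fin.forall_fin_succ])
    (by simp [Fin.forall_fin_succ, *])

lemma step_q3_q1 (ha : 0 < a) (hb : 0 < b) (hc : 0 < c) (hk : 0 < k) :
    A18.Step (2, ![a, b, c + 1, k]) (0, ![a, b, c, k]) :=
  .of_mem (u := ![0, 0, -1, 0]) (by simp [A18]) (by simp [Fin.forall_fin_succ])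
    (by simp [Fin.forall_fin_succ, *])

lemma step_q3_q3 (hb : 0 < b) (hc : 0 < c) (hk : 0 < k) :
    A18.Step (2, ![a, b + 1, c, k]) (2, ![a + 1, b, c, k]) :=
  .of_mem (u := ![1, -1, 0, 0]) (by simp [A18]) (by simp [Fin.forall_fin_succ])
    (by simp [Fin.forall_fin_succ, *])

lemma step_q1_q4 (ha : 0 < a) (hb : 0 < b) (hc : 0 < c) (hk : 0 < k) :
    A18.Step (0, ![a, b, c, k]) (3, ![a, b, c, k]) :=
  .of_mem (u := ![0, 0, 0, 0]) (by simp [A18]) (by simp [Fin.forall_fin_succ])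
    (by simp [Fin.forall_fin_succ, *])

lemma step_q4_q1 (ha : 0 < a) (hb : 0 < b) (hc : 0 < c) (hk : 0 < k) :
    A18.Step (3, ![a, b, c, k + 1]) (0, ![a, b, c, k]) :=
  .of_mem (u := ![0, 0, 0, -1]) (by simp [A18]) (by simp [Fin.forall_fin_succ])
    (by simp [Fin.forall_fin_succ, *])

lemma step_q4_q4 (hb : 0 < b) (hk : 0 < k) :
    A18.Step (3, ![a, b + 1, c, k]) (3, ![a + 1, b, c + 1, k]) :=
  .of_mem (u := ![1, -1, 1, 0]) (by simp [A18]) (by simp [Fin.forall_fin_succ])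
    (by simp [Fin.forall_fin_succ, *])

lemma run_q1_q2_loop (ha : 0 < a) (hc : 0 < c) (hk : 0 < k) (m : ℕ) :
    (0, ![a + m, b, c, k]) ⟶* (0, ![a, b + 2 * m, c, k]) := by
  induction m generalizing b with
  | zero => rfl
  | succ m ih =>
    have h1 := step_q1_q2 (a := a + m) (b := b) (by omega) hc hk
    have h2 := step_q2_q1 (b := b + 1) (show 0 < a + m by omega) hc hk
    convert ReflTransGen.head h1 (.head h2 (ih (b := b + 2))) using 2 <;> simp <;> omega

lemma run_q3_loop (hb : 0 < b) (hc : 0 < c) (hk : 0 < k) (m : ℕ) :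
    (2, ![a, b + m, c, k]) ⟶* (2, ![a + m, b, c, k]) := by
  induction m generalizing a with
  | zero => rfl
  | succ m ih =>
    have h := step_q3_q3 (a := a) (b := b + m) (by omega) hc hk
    convert ReflTransGen.head h (ih (a := a + 1)) using 2 <;> simp <;> omega

lemma run_q4_loop (hb : 0 < b) (hk : 0 < k) (m : ℕ) :
    (3, ![a, b + m, c, k]) ⟶* (3, ![a + m, b, c + m, k]) := by
  induction m generalizing a c with
  | zero => rfl
  | succ m ih =>
    have h := step_q4_q4 (a := a) (b := b + m) (c := c) (by omega) hk
    convert ReflTransGen.head h (ih (a := a + 1) (c := c + 1)) using 2 <;> simp <;> omega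

lemma run_double (hc : 0 < c) (hk : 0 < k) (a : ℕ) :
    (0, ![a + 1, 1, c + 1, k]) ⟶* (0, ![2 * a + 1, 1, c, k]) := by
  have h1 := run_q1_q2_loop (a := 1) (b := 1) (c := c + 1) one_pos (by omega) hk a
  have h2 := step_q1_q3 (a := 1) (b := 1 + 2 * a) (c := c + 1) one_pos (by omega) (by omega) hk
  have h3 := run_q3_loop (a := 1) (b := 1) (c := c + 1) one_pos (by omega) hk (2 * a)
  have h4 := step_q3_q1 (a := 1 + 2 * a) (b := 1) (k := k) (by omega) one_pos hc hk
  convert h1.tail h2 |>.trans h3 |>.tail h4 using 2 <;> simp <;> omega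

lemma run_double_iter (hk : 0 < k) (c : ℕ) :
    ∀ a, (0, ![a + 1, 1, c + 1, k]) ⟶* (0, ![2 ^ c * a + 1, 1, 1, k]) := by
  induction c with
  | zero => intro a; simpa using .refl
  | succ c ih =>
    intro a
    convert (run_double (by omega) hk a).trans (ih (2 * a)) using 2
    simp [pow_succ, mul_assoc]

def boost (a : ℕ) : ℕ := 2 ^ (2 * a) * (2 * a)

lemma run_boost (hk : 0 < k) (a : ℕ) :
    (0, ![a + 1, 1, 1, k + 1]) ⟶* (0, ![boost a + 1, 1, 1, k]) := by
  have h1 := run_q1_q2_loop (a := 1) (b := 1) (c := 1) (k := k + 1) one_pos one_pos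
    (by omega) a
  have h2 := step_q1_q4 (a := 1) (b := 1 + 2 * a) (c := 1) (k := k + 1) one_pos (by omega)
    one_pos (by omega)
  have h3 := run_q4_loop (a := 1) (b := 1) (c := 1) (k := k + 1) one_pos (by omega) (2 * a)
  have h4 := step_q4_q1 (a := 1 + 2 * a) (b := 1) (c := 1 + 2 * a) (k := k) (by omega) one_pos
    (by omega) hk
  have h5 : (0, ![1 + 2 * a, 1, 1 + 2 * a, k]) ⟶* (0, ![boost a + 1, 1, 1, k]) := by
    convert run_double_iter hk (2 * a) (2 * a) using 2
    · simp; omega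
    · rfl
  convert h1.tail h2 |>.trans h3 |>.tail h4 |>.trans h5 using 2
  simp; omega

lemma run_boost_iter (hk : 0 < k) (j : ℕ) :
    ∀ a, (0, ![a + 1, 1, 1, k + j]) ⟶* (0, ![boost^[j] a + 1, 1, 1, k]) := by
  induction j with
  | zero => exact fun _ => .refl
  | succ j ih =>
    intro a
    rw [Function.iterate_succ_apply]
    exact (run_boost (k := k + j) (by omega) a).trans (ih (boost a))

lemma run_from_const (m : ℕ) :
    (0, fun _ => m + 3) ⟶* (0, ![boost^[m + 2] (2 ^ (m + 1) * (2 * m + 4)) + 1, 1, 1, 1]) := by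
  have h1 := step_q1_q3 (a := m + 3) (b := m + 3) (c := m + 3) (k := m + 3)
    (by omega) (by omega) (by omega) (by omega)
  have h2 : (2, ![m + 3, m + 3, m + 3, m + 3]) ⟶* (2, ![2 * m + 5, 1, m + 3, m + 3]) := by
    convert run_q3_loop (a := m + 3) (b := 1) (c := m + 3) (k := m + 3) one_pos
      (by omega) (by omega) (m + 2) using 2 <;> simp <;> omega
  have h3 := step_q3_q1 (a := 2 * m + 5) (b := 1) (c := m + 2) (k := m + 3)
    (by omega) one_pos (by omega) (by omega)
  have h4 := run_double_iter (k := m + 3) (by omega) (m + 1) (2 * m + 4)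
  have h5 := run_boost_iter (k := 1) one_pos (m + 2) (2 ^ (m + 1) * (2 * m + 4))
  rw [show 1 + (m + 2) = m + 3 by omega] at h5
  convert ReflTransGen.head h1 h2 |>.tail h3 |>.trans h4 |>.trans h5 using 2
  funext j
  fin_cases j <;> rfl

lemma two_mul_two_pow_le_boost {n t x : ℕ} (h : 2 * n + t ≤ 2 * x) :
    2 * n * 2 ^ t ≤ boost x := by
  rcases Nat.eq_zero_or_pos n with rfl | hn
  · simp
  calc 2 * n * 2 ^ t ≤ 2 ^ (2 * n) * 2 ^ t := by gcongr; exact Nat.lt_two_pow_self.le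
    _ = 2 ^ (2 * n + t) := (pow_add _ _ _).symm
    _ ≤ 2 ^ (2 * x) := Nat.pow_le_pow_right two_pos h
    _ ≤ boost x := Nat.le_mul_of_pos_right _ (by omega)

lemma two_mul_tow_le_boost_iter {n a : ℕ} (hn : 1 ≤ n) (ha : 2 * n + 2 ^ n ≤ 2 * a) :
    ∀ j, 2 * n * Tow (j + 2) n ≤ boost^[j + 1] a
  | 0 => two_mul_two_pow_le_boost ha
  | j + 1 => by
    have ih := two_mul_tow_le_boost_iter hn ha j
    have ht : 1 ≤ Tow (j + 2) n := Nat.one_le_two_pow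
    rw [Function.iterate_succ_apply']
    exact two_mul_two_pow_le_boost (by nlinarith)

lemma exists_long_computation (m : ℕ) :
    ∃ (len : ℕ) (q : ℕ → Fin 4) (z : ℕ → Fin 4 → ℕ),
      q 0 = 0 ∧ z 0 = (fun _ => m + 3) ∧ A18.IsZeroAvoiding len q z ∧
      (m + 3) * Tow (m + 3) (m + 3) ≤ len := by
  obtain ⟨len, f, hf0, hflen, hza⟩ :=
    VASS.exists_isZeroAvoiding_of_reflTransGen (by simp) (run_from_const m)
  have hgrowth := hza.le_add 0 len le_rfl
  simp only [hf0, hflen, Matrix.cons_val_zero] at hgrowth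
  have hbase : 2 * (m + 3) + 2 ^ (m + 3) ≤ 2 * (2 ^ (m + 1) * (2 * m + 4)) := by
    have := Nat.lt_two_pow_self (n := m + 1)
    rw [pow_add 2 (m + 1) 2]
    nlinarith
  have hbound :
      2 * (m + 3) * Tow (m + 3) (m + 3) ≤ boost^[m + 2] (2 ^ (m + 1) * (2 * m + 4)) :=
    two_mul_tow_le_boost_iter (by omega) hbase (m + 1)
  have htow : 1 ≤ Tow (m + 3) (m + 3) := Nat.one_le_two_pow
  refine ⟨len, _, _, by simp [hf0], by simp [hf0], hza, ?_⟩
  nlinarith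

lemma not_exists_pos_normal : ¬ ∃ nv ∈ A18.Normals, ∀ i, 0 < nv i := by
  rintro ⟨nv, ⟨-, hnv⟩, hpos⟩
  have h1 := hnv _ (VASS.mem_Inc_of_loop (p := 2) (u := ![1, -1, 0, 0]) (by simp [A18]))
  have h2 := hnv _ (VASS.add_mem_Inc_of_two_cycle (p := 0) (p' := 1) (u := ![-1, 1, 0, 0])
    (u' := ![0, 1, 0, 0]) (by decide) (by simp [A18]) (by simp [A18]))
  simp [VASS.dotZ, Fin.sum_univ_four] at h1 h2
  linarith [hpos 1]

lemma update_three_nonpos : ∀ t ∈ A18.T, t.2.1 3 ≤ 0 := by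
  simp only [A18, Set.mem_insert_iff, Set.mem_singleton_iff]
  rintro t (rfl | rfl | rfl | rfl | rfl | rfl | rfl | rfl) <;> simp

end A18

/-- the VASS `A18` satisfies condition (D) and has non-elementary
termination complexity: for all sufficiently large `n` there is a zero-avoiding
computation from `q₁(n,n,n,n)` of length at least `n · Tow n n`; in particular
`𝓛(n) ≥ n · Tow n n` for all sufficiently large `n`. -/
theorem stmt18 :
    (¬ ∃ nv ∈ A18.Normals, ∀ i, 0 < nv i) ∧
    (∃ nv ∈ A18.Normals, ∀ i, 0 ≤ nv i) ∧
    (∃ N : ℕ, ∀ n : ℕ, N ≤ n →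
      (∃ (len : ℕ) (q : ℕ → Fin 4) (z : ℕ → Fin 4 → ℕ),
        q 0 = 0 ∧ z 0 = (fun _ => n) ∧ A18.IsZeroAvoiding len q z ∧
        n * Tow n n ≤ len) ∧
      ((n * Tow n n : ℕ) : ℕ∞) ≤ A18.L n) := by
  have he₄ : (0 : Fin 4 → ℝ) ≤ Pi.single 3 1 := Pi.single_nonneg.2 zero_le_one
  refine ⟨A18.not_exists_pos_normal,
    ⟨_, VASS.single_mem_Normals A18.update_three_nonpos, he₄⟩, 3, fun n hn => ?_⟩
  obtain ⟨m, rfl⟩ : ∃ m, n = m + 3 := ⟨n - 3, by omega⟩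
  obtain ⟨len, q, z, hq0, hz0, hza, hlen⟩ := A18.exists_long_computation m
  have hsup : Finset.univ.sup (z 0) = m + 3 := by
    rw [hz0]
    exact Finset.sup_const Finset.univ_nonempty _
  exact ⟨⟨len, q, z, hq0, hz0, hza, hlen⟩,
    (Nat.cast_le.2 hlen).trans (VASS.le_L_of_isZeroAvoiding hza hsup)⟩
end
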